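/- arXiv:2310.14688 — 4 statements merged into one kernel-verified Lean document; each statement's English description precedes it below -/
import Mathlib

section
/- Let d ≥ 1, f ∈ L¹(ℝ^d), t > 0, and x ∈ ℝ^d. Then (it)^{-d/2} e^{i|x|²/(2t)} · conj( (2πi/t)^{-d/2} ∫_{ℝ^d} e^{(1/2)it|x/t − y|²} f(y) dy ) = (2π)^{-d/2} ∫_{ℝ^d} e^{i x·y − (1/2)it|y|²} conj(f(y)) dy, where all complex powers are principal branches. Equivalently: writing v(τ,·) = S(τ)f and V(t,y) = e^{-(1/2)it|y|²} conj(f(y)), one has 𝒯v(t,x) = (𝓕 V(t,·))(−x); that is, the pseudo-conformal transform of the linear Schrödinger flow of f equals the linear flow of 𝓕^{-1}(conj f). -/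
noncomputable section

open MeasureTheory Complex Filter Topology ProbabilityTheory
open scoped ENNReal RealInnerProductSpace

/-- `d`-dimensional Euclidean space `ℝ^d`. -/
abbrev Ed (d : ℕ) : Type := EuclideanSpace ℝ (Fin d)

/-- The Fresnel-integral formula `(2πit)^{-d/2} ∫ e^{i|x−y|²/(2t)} f(y) dy` for the free
Schrödinger propagator `e^{(1/2)itΔ}` (principal branch of the complex power). -/
def fresnel (d : ℕ) (t : ℝ) (f : Ed d → ℂ) (x : Ed d) : ℂ :=
  (2 * (Real.pi : ℂ) * I * (t : ℂ)) ^ (-(d : ℂ) / 2) *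
    ∫ y : Ed d, Complex.exp (I * ((‖x - y‖ : ℂ)) ^ 2 / (2 * (t : ℂ))) * f y

/-- The free Schrödinger propagator `S(t) = e^{(1/2)itΔ}` on `L²(ℝ^d)`: a family of maps on
functions which is an a.e.-defined linear isometry of `L²`, equals the identity at `t = 0`, and
is given by the Fresnel integral on `L¹ ∩ L²` for `t ≠ 0`.  These properties characterise the
propagator uniquely up to a.e. equality. -/
structure SchrodingerPropagator (d : ℕ) where
  S : ℝ → (Ed d → ℂ) → Ed d → ℂ
  aemeas : ∀ (t : ℝ) (f : Ed d → ℂ), MemLp f 2 volume → AEStronglyMeasurable (S t f) volume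
  isometry : ∀ (t : ℝ) (f : Ed d → ℂ), MemLp f 2 volume →
    eLpNorm (S t f) 2 volume = eLpNorm f 2 volume
  map_add : ∀ (t : ℝ) (f g : Ed d → ℂ), MemLp f 2 volume → MemLp g 2 volume →
    S t (fun x => f x + g x) =ᵐ[volume] fun x => S t f x + S t g x
  map_smul : ∀ (t : ℝ) (c : ℂ) (f : Ed d → ℂ), MemLp f 2 volume →
    S t (fun x => c * f x) =ᵐ[volume] fun x => c * S t f x
  congr_ae : ∀ (t : ℝ) (f g : Ed d → ℂ), MemLp f 2 volume → f =ᵐ[volume] g →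
    S t f =ᵐ[volume] S t g
  time_zero : ∀ f : Ed d → ℂ, MemLp f 2 volume → S 0 f =ᵐ[volume] f
  fresnel_formula : ∀ t : ℝ, t ≠ 0 → ∀ f : Ed d → ℂ, Integrable f volume →
    MemLp f 2 volume → S t f =ᵐ[volume] fresnel d t f

/-- `u` is a global mild solution of `i∂ₜu + (1/2)Δu = μ|u|ᵖu` with data `u₀ ∈ L²(ℝ^d)`, in the
class `C(ℝ; L²) ∩ L^{2(d+2)/d}_loc`, the Duhamel formula
`u(t) = S(t)u₀ − iμ∫₀ᵗ S(t−τ)(|u(τ)|ᵖu(τ)) dτ` being formulated weakly (tested against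
arbitrary `g ∈ L²`, using `⟨S(t−τ)N, g⟩ = ⟨N, S(τ−t)g⟩`). -/
structure IsMildSolution (d : ℕ) (p μ : ℝ) (P : SchrodingerPropagator d)
    (u₀ : Ed d → ℂ) (u : ℝ → Ed d → ℂ) : Prop where
  init : u 0 =ᵐ[volume] u₀
  memL2 : ∀ t : ℝ, MemLp (u t) 2 volume
  contL2 : ∀ t₀ : ℝ,
    Tendsto (fun t => eLpNorm (fun x => u t x - u t₀ x) 2 volume) (𝓝 t₀) (𝓝 0)
  jointMeas : AEStronglyMeasurable (Function.uncurry u) volume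
  locStrichartz : ∀ R : ℝ, 0 < R →
    MemLp (Function.uncurry u) (ENNReal.ofReal (2 * ((d : ℝ) + 2) / d))
      (volume.restrict (Set.Icc (-R) R ×ˢ (Set.univ : Set (Ed d))))
  duhamel : ∀ t : ℝ, ∀ g : Ed d → ℂ, MemLp g 2 volume →
    ∫ x, u t x * (starRingEnd ℂ) (g x) =
      (∫ x, P.S t u₀ x * (starRingEnd ℂ) (g x)) -
        I * (μ : ℂ) * ∫ τ in (0:ℝ)..t, ∫ x,
          ((‖u τ x‖ ^ p : ℝ) : ℂ) * u τ x * (starRingEnd ℂ) (P.S (τ - t) g x)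

/-- The solution `u` scatters forward in time in `L²`. -/
def ScattersForward (d : ℕ) (P : SchrodingerPropagator d) (u : ℝ → Ed d → ℂ) : Prop :=
  ∃ uplus : Ed d → ℂ, MemLp uplus 2 volume ∧
    Tendsto (fun t => eLpNorm (fun x => u t x - P.S t uplus x) 2 volume) atTop (𝓝 0)

/-- The solution `u` scatters backward in time in `L²`. -/
def ScattersBackward (d : ℕ) (P : SchrodingerPropagator d) (u : ℝ → Ed d → ℂ) : Prop :=
  ∃ uminus : Ed d → ℂ, MemLp uminus 2 volume ∧
    Tendsto (fun t => eLpNorm (fun x => u t x - P.S t uminus x) 2 volume) atBot (𝓝 0)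

/-- The pseudo-conformal transform `𝒯f(t,x) = (it)^{-d/2} e^{i|x|²/(2t)} conj(f(1/t, x/t))`. -/
def pct (d : ℕ) (f : ℝ → Ed d → ℂ) (t : ℝ) (x : Ed d) : ℂ :=
  (I * (t : ℂ)) ^ (-(d : ℂ) / 2) * Complex.exp (I * ((‖x‖ : ℂ)) ^ 2 / (2 * (t : ℂ))) *
    (starRingEnd ℂ) (f t⁻¹ (t⁻¹ • x))

/-- The Galilean vector field `J(t)g(x) = x g(x) + i t ∇g(x)`, a `ℂ^d`-valued function. -/
def galJ (d : ℕ) (t : ℝ) (g : Ed d → ℂ) (x : Ed d) : EuclideanSpace ℂ (Fin d) :=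
  (WithLp.equiv 2 (Fin d → ℂ)).symm fun j =>
    ((x j : ℝ) : ℂ) * g x + I * (t : ℂ) * fderiv ℝ g x (EuclideanSpace.single j 1)

/-- `F` is the distributional (weak) gradient of `f` on `ℝ^d`. -/
def HasWeakGradient (d : ℕ) (f : Ed d → ℂ) (F : Ed d → EuclideanSpace ℂ (Fin d)) : Prop :=
  ∀ φ : Ed d → ℂ, ContDiff ℝ (⊤ : ℕ∞) φ → HasCompactSupport φ → ∀ j : Fin d,
    ∫ x, f x * fderiv ℝ φ x (EuclideanSpace.single j 1) = -∫ x, F x j * φ x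

/-- `F` represents, in the distributional sense, `J(t)g = x g + i t ∇g`. -/
def IsGalileanJOf (d : ℕ) (t : ℝ) (g : Ed d → ℂ) (F : Ed d → EuclideanSpace ℂ (Fin d)) : Prop :=
  ∀ φ : Ed d → ℂ, ContDiff ℝ (⊤ : ℕ∞) φ → HasCompactSupport φ → ∀ j : Fin d,
    ∫ x, F x j * φ x =
      (∫ x, ((x j : ℝ) : ℂ) * g x * φ x) -
        I * (t : ℂ) * ∫ x, g x * fderiv ℝ φ x (EuclideanSpace.single j 1)

/-- The Laplacian of a (smooth) function `f : ℝ^d → ℂ`. -/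
def laplacianC (d : ℕ) (f : Ed d → ℂ) (x : Ed d) : ℂ :=
  ∑ j : Fin d, fderiv ℝ (fun y => fderiv ℝ f y (EuclideanSpace.single j 1)) x
    (EuclideanSpace.single j 1)

/-- `h` represents, in the distributional sense, `⟨∇⟩²g = (1 − Δ)g`. -/
def IsOnePlusNegLapOf (d : ℕ) (g h : Ed d → ℂ) : Prop :=
  ∀ φ : Ed d → ℂ, ContDiff ℝ (⊤ : ℕ∞) φ → HasCompactSupport φ →
    ∫ x, h x * φ x = ∫ x, g x * (φ x - laplacianC d φ x)

/-- The mixed spacetime norm `‖F‖_{L^q_t L^r_x (I × ℝ^d)}` (valued in `ℝ≥0∞`). -/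
def mixedNorm {d : ℕ} {α : Type*} [NormedAddCommGroup α] (I : Set ℝ) (q r : ℝ≥0∞)
    (F : ℝ → Ed d → α) : ℝ≥0∞ :=
  eLpNorm (fun t => (eLpNorm (F t) r volume).toReal) q (volume.restrict I)

/-- `(q, r)` is an `L²`-admissible Strichartz pair in dimension `d`. -/
def IsAdmissible (d : ℕ) (q r : ℝ≥0∞) : Prop :=
  2 ≤ q ∧ 2 ≤ r ∧ 2 / q + (d : ℝ≥0∞) / r = (d : ℝ≥0∞) / 2 ∧ ¬(q = 2 ∧ r = ⊤ ∧ d = 2)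

/-- The Fourier transform `𝓕g(ξ) = (2π)^{-d/2} ∫ e^{-i y·ξ} g(y) dy`. -/
def myFourier (d : ℕ) (g : Ed d → ℂ) (ξ : Ed d) : ℂ :=
  (((2 * Real.pi) ^ (-(d : ℝ) / 2) : ℝ) : ℂ) *
    ∫ y : Ed d, Complex.exp (-(I * ((⟪y, ξ⟫ : ℝ) : ℂ))) * g y

/-- Auxiliary: the constant identity `(it)^{-d/2} conj((2πi/t)^{-d/2}) = (2π)^{-d/2}`. -/
lemma pct_const_aux (d : ℕ) (t : ℝ) (ht : 0 < t) :
    (I * (t : ℂ)) ^ (-(d : ℂ) / 2) *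
      (starRingEnd ℂ) ((2 * (Real.pi : ℂ) * I / (t : ℂ)) ^ (-(d : ℂ) / 2)) =
    (2 * (Real.pi : ℂ)) ^ (-(d : ℂ) / 2) := by
  have htne : t ≠ 0 := ht.ne'
  have htc : (t : ℂ) ≠ 0 := Complex.ofReal_ne_zero.mpr htne
  have hz1 : I * (t : ℂ) ≠ 0 := mul_ne_zero I_ne_zero htc
  have hpi : (0:ℝ) < 2 * Real.pi := by positivity
  have h2pine : (2 * (Real.pi : ℂ)) ≠ 0 := by
    have := Complex.ofReal_ne_zero.mpr (ne_of_gt hpi)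
    simpa using this
  have hz2 : (2 * (Real.pi : ℂ) * I / (t : ℂ)) ≠ 0 :=
    div_ne_zero (mul_ne_zero h2pine I_ne_zero) htc
  have h2pi : (2 * (Real.pi : ℂ)) ≠ 0 := by
    simpa using Complex.ofReal_ne_zero.mpr (ne_of_gt hpi)
  have hw : (starRingEnd ℂ) (-(d : ℂ) / 2) = -(d : ℂ) / 2 := by
    simp [map_div₀, map_ofNat]
  -- rewrite conj of cpow
  have hconj : (starRingEnd ℂ) ((2 * (Real.pi : ℂ) * I / (t : ℂ)) ^ (-(d : ℂ) / 2)) =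
      Complex.exp ((starRingEnd ℂ) (Complex.log (2 * (Real.pi : ℂ) * I / (t : ℂ))) *
        (-(d : ℂ) / 2)) := by
    rw [Complex.cpow_def_of_ne_zero hz2, ← Complex.exp_conj, map_mul, hw]
  rw [hconj, Complex.cpow_def_of_ne_zero hz1, Complex.cpow_def_of_ne_zero h2pi,
    ← Complex.exp_add, ← add_mul]
  congr 2
  -- log (I t) + conj (log (2πI/t)) = log (2π)
  have habs1 : ‖I * (t : ℂ)‖ = t := by
    simp [abs_of_pos ht]
  have habs2 : ‖2 * (Real.pi : ℂ) * I / (t : ℂ)‖ = 2 * Real.pi / t := by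
    simp [map_div₀, abs_of_pos ht, abs_of_pos Real.pi_pos]
  have harg1 : (I * (t : ℂ)).arg = Real.pi / 2 := by
    rw [Complex.arg_eq_pi_div_two_iff]
    constructor
    · simp
    · simpa using ht
  have harg2 : (2 * (Real.pi : ℂ) * I / (t : ℂ)).arg = Real.pi / 2 := by
    rw [Complex.arg_eq_pi_div_two_iff]
    constructor
    · simp [Complex.div_re]
    · simp only [Complex.div_im, Complex.div_re]
      have : (2 * (Real.pi : ℂ) * I).im = 2 * Real.pi := by simp
      simp [this, Complex.normSq_ofReal]
      positivity
  apply Complex.ext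
  · simp only [Complex.add_re, Complex.log_re, Complex.conj_re, habs1, habs2]
    rw [← Real.log_mul htne (by positivity), mul_div_cancel₀ _ htne,
      show (2*(Real.pi:ℂ)) = ((2*Real.pi:ℝ):ℂ) by push_cast; ring, Complex.norm_real,
      Real.norm_eq_abs, abs_of_pos hpi]
  · simp only [Complex.add_im, Complex.log_im, Complex.conj_im, harg1, harg2]
    rw [Complex.arg_eq_zero_iff.mpr]
    · ring
    constructor
    · have : (2 * (Real.pi : ℂ)).re = 2 * Real.pi := by simp
      rw [this]; positivity
    · simp

/-- **Lemma 6.2 (Pseudo-conformal transform of the linear flow).**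
For `f ∈ L¹(ℝ^d)`, `t > 0` and `x ∈ ℝ^d`:
`(it)^{-d/2} e^{i|x|²/(2t)} conj( (2πi/t)^{-d/2} ∫ e^{(1/2)it|x/t − y|²} f(y) dy )`
`= (2π)^{-d/2} ∫ e^{i x·y − (1/2)it|y|²} conj(f(y)) dy`,
i.e. `𝒯(S(·)f)(t,x) = 𝓕(e^{−(1/2)it|·|²} conj f)(−x)`. -/
theorem pct_of_linear_flow
    (d : ℕ) (hd : 1 ≤ d) (f : Ed d → ℂ) (hf : Integrable f volume)
    (t : ℝ) (ht : 0 < t) (x : Ed d) :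
    (I * (t : ℂ)) ^ (-(d : ℂ) / 2) * Complex.exp (I * ((‖x‖ : ℂ)) ^ 2 / (2 * (t : ℂ))) *
      (starRingEnd ℂ) ((2 * (Real.pi : ℂ) * I / (t : ℂ)) ^ (-(d : ℂ) / 2) *
        ∫ y : Ed d, Complex.exp ((1 / 2 : ℂ) * I * (t : ℂ) * ((‖t⁻¹ • x - y‖ : ℂ)) ^ 2) * f y)
    = (2 * (Real.pi : ℂ)) ^ (-(d : ℂ) / 2) *
        ∫ y : Ed d, Complex.exp (I * ((⟪x, y⟫ : ℝ) : ℂ)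
            - (1 / 2 : ℂ) * I * (t : ℂ) * ((‖y‖ : ℂ)) ^ 2) * (starRingEnd ℂ) (f y) := by
  have htne : t ≠ 0 := ht.ne'
  have htc : (t : ℂ) ≠ 0 := Complex.ofReal_ne_zero.mpr htne
  rw [map_mul, ← integral_conj,
    show ∀ a b c e : ℂ, a * b * (c * e) = a * c * (b * e) from fun a b c e => by ring,
    pct_const_aux d t ht, ← integral_const_mul]
  congr 1
  refine integral_congr_ae (Filter.Eventually.of_forall fun y => ?_)
  simp only
  rw [map_mul, ← mul_assoc, ← Complex.exp_conj, ← Complex.exp_add]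
  congr 2
  have hr : ‖t⁻¹ • x - y‖ ^ 2
      = t⁻¹ ^ 2 * ‖x‖ ^ 2 - 2 * (t⁻¹ * ⟪x, y⟫) + ‖y‖ ^ 2 := by
    rw [norm_sub_sq_real, norm_smul, real_inner_smul_left, Real.norm_eq_abs,
      abs_of_pos (inv_pos.mpr ht)]
    ring
  have hc : ((‖t⁻¹ • x - y‖ : ℂ)) ^ 2
      = ((t⁻¹ ^ 2 * ‖x‖ ^ 2 - 2 * (t⁻¹ * ⟪x, y⟫) + ‖y‖ ^ 2 : ℝ) : ℂ) := by
    rw [← hr]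
    push_cast
    ring
  simp only [map_mul, map_pow, map_div₀, map_one, map_ofNat, Complex.conj_I,
    Complex.conj_ofReal, hc]
  push_cast
  field_simp
  have hcancel : ((t:ℂ))⁻¹ ^ 4 * (t:ℂ) ^ 4 = 1 := by
    rw [← mul_pow, inv_mul_cancel₀ htc, one_pow]
  linear_combination
end
end

section
/- Let d ≥ 1, let t ≠ 0, and let f : (ℝ∖{0}) × ℝ^d → ℂ be such that y ↦ f(1/t, y) is (real-)differentiable on ℝ^d. Then x ↦ 𝒯f(t,x) is differentiable and for every x ∈ ℝ^d, ∇_x(𝒯f)(t,x) = i · 𝒯(Jf)(t,x), where (Jf)(τ,y) := y f(τ,y) + iτ ∇_y f(τ,y) is ℂ^d-valued and 𝒯 is applied componentwise to Jf. -/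
noncomputable section

open MeasureTheory Complex Filter Topology ProbabilityTheory
open scoped ENNReal RealInnerProductSpace

/-- **Lemma 2.10 (1): `∇𝒯 = i𝒯J`.**
If `y ↦ f(1/t, y)` is differentiable then `x ↦ 𝒯f(t,x)` is differentiable, and each partial
derivative of `𝒯f(t,·)` equals `i` times the pseudo-conformal transform of the corresponding
component of `Jf(τ,y) = y f(τ,y) + iτ∇f(τ,y)`. -/
theorem grad_pct_eq_pct_galJ (d : ℕ) (hd : 1 ≤ d) (f : ℝ → Ed d → ℂ) (t : ℝ) (ht : t ≠ 0)
    (hf : Differentiable ℝ (f t⁻¹)) :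
    Differentiable ℝ (fun x => pct d f t x) ∧
    ∀ (x : Ed d) (j : Fin d),
      fderiv ℝ (fun x => pct d f t x) x (EuclideanSpace.single j 1) =
        I * pct d (fun τ y => ((y j : ℝ) : ℂ) * f τ y +
          I * (τ : ℂ) * fderiv ℝ (f τ) y (EuclideanSpace.single j 1)) t x := by
  have ht' : (t : ℂ) ≠ 0 := by exact_mod_cast ht
  have key : ∀ x : Ed d, ∃ L : Ed d →L[ℝ] ℂ, HasFDerivAt (fun y => pct d f t y) L x ∧
      ∀ j : Fin d, L (EuclideanSpace.single j 1) =
        (I * (t : ℂ)) ^ (-(d : ℂ) / 2) * Complex.exp (I * ((‖x‖ : ℂ)) ^ 2 / (2 * (t : ℂ))) *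
          (I * (x j : ℝ) / t * (starRingEnd ℂ) (f t⁻¹ (t⁻¹ • x))
            + (t⁻¹ : ℝ) * (starRingEnd ℂ)
                (fderiv ℝ (f t⁻¹) (t⁻¹ • x) (EuclideanSpace.single j 1))) := by
    intro x
    have hsq : HasFDerivAt (fun y : Ed d => (‖y‖ ^ 2 : ℝ)) (2 • (innerSL ℝ x)) x := by
      simpa using (hasFDerivAt_id x).norm_sq
    have h1 : HasFDerivAt (fun y : Ed d => ((‖y‖ ^ 2 : ℝ) : ℂ))
        (Complex.ofRealCLM.comp (2 • (innerSL ℝ x))) x :=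
      Complex.ofRealCLM.hasFDerivAt.comp x hsq
    have heq : (fun y : Ed d => I * ((‖y‖ : ℂ)) ^ 2 / (2 * (t : ℂ))) =
        fun y => (I / (2 * (t : ℂ))) * ((‖y‖ ^ 2 : ℝ) : ℂ) := by
      funext y; push_cast; ring
    have hphi : HasFDerivAt (fun y : Ed d => I * ((‖y‖ : ℂ)) ^ 2 / (2 * (t : ℂ)))
        ((I / (2 * (t : ℂ))) • (Complex.ofRealCLM.comp (2 • (innerSL ℝ x)))) x := by
      rw [heq]; exact h1.const_mul _
    have hexp := hphi.cexp
    have hsmul : HasFDerivAt (fun y : Ed d => t⁻¹ • y)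
        (t⁻¹ • ContinuousLinearMap.id ℝ (Ed d)) x := (hasFDerivAt_id x).const_smul t⁻¹
    have hff : HasFDerivAt (fun y : Ed d => f t⁻¹ (t⁻¹ • y))
        ((fderiv ℝ (f t⁻¹) (t⁻¹ • x)).comp (t⁻¹ • ContinuousLinearMap.id ℝ (Ed d))) x :=
      ((hf (t⁻¹ • x)).hasFDerivAt).comp x hsmul
    have hconj : HasFDerivAt (fun y : Ed d => (starRingEnd ℂ) (f t⁻¹ (t⁻¹ • y)))
        ((Complex.conjCLE : ℂ ≃L[ℝ] ℂ).toContinuousLinearMap.comp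
          ((fderiv ℝ (f t⁻¹) (t⁻¹ • x)).comp (t⁻¹ • ContinuousLinearMap.id ℝ (Ed d)))) x :=
      (Complex.conjCLE.toContinuousLinearMap.hasFDerivAt).comp x hff
    have hmul := hexp.mul hconj
    have hfinal := hmul.const_mul ((I * (t : ℂ)) ^ (-(d : ℂ) / 2))
    have hpct : HasFDerivAt (fun y => pct d f t y)
        ((I * (t : ℂ)) ^ (-(d : ℂ) / 2) •
          (Complex.exp (I * ((‖x‖ : ℂ)) ^ 2 / (2 * (t : ℂ))) •
              (Complex.conjCLE : ℂ ≃L[ℝ] ℂ).toContinuousLinearMap.comp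
                ((fderiv ℝ (f t⁻¹) (t⁻¹ • x)).comp (t⁻¹ • ContinuousLinearMap.id ℝ (Ed d))) +
            (starRingEnd ℂ) (f t⁻¹ (t⁻¹ • x)) •
              Complex.exp (I * ((‖x‖ : ℂ)) ^ 2 / (2 * (t : ℂ))) •
                (I / (2 * (t : ℂ))) • Complex.ofRealCLM.comp (2 • (innerSL ℝ x)))) x := by
      refine hfinal.congr_of_eventuallyEq (Filter.Eventually.of_forall fun y => ?_)
      simp only [pct, Pi.mul_apply]; ring
    refine ⟨_, hpct, ?_⟩
    · intro j
      have hx : ⟪x, (EuclideanSpace.single j (1:ℝ) : Ed d)⟫ = x j := by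
        rw [EuclideanSpace.inner_single_right]; simp
      simp only [ContinuousLinearMap.add_apply, ContinuousLinearMap.smul_apply,
        ContinuousLinearMap.comp_apply, ContinuousLinearMap.coe_smul',
        ContinuousLinearMap.id_apply, Pi.smul_apply, innerSL_apply_apply,
        ContinuousLinearEquiv.coe_coe, Complex.conjCLE_apply, smul_eq_mul, hx]
      rw [(fderiv ℝ (f t⁻¹) (t⁻¹ • x)).map_smul]
      simp only [smul_eq_mul, Complex.real_smul, Complex.ofReal_mul, Complex.ofReal_ofNat,
        Complex.ofReal_inv, map_mul, map_inv₀, Complex.conj_ofReal, Complex.ofRealCLM_apply]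
      push_cast
      ring
  constructor
  · exact fun x => ((key x).choose_spec.1).differentiableAt
  · intro x j
    obtain ⟨L, hL, hLj⟩ := key x
    rw [hL.fderiv, hLj]
    simp only [pct, map_add, map_mul, Complex.conj_I, Complex.conj_ofReal, map_inv₀]
    have hxj : ((t⁻¹ • x : Ed d) j : ℝ) = t⁻¹ * x j := rfl
    rw [hxj]
    have : ((starRingEnd ℂ) ((t⁻¹ : ℝ) : ℂ)) = ((t⁻¹ : ℝ) : ℂ) := Complex.conj_ofReal _
    push_cast
    ring_nf
    rw [Complex.I_sq]
    ring
end
end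

section
/- Let d ≥ 1, p > 0, t ∈ ℝ, and let u : ℝ^d → ℂ be (real-)differentiable. Then at every point x ∈ ℝ^d with u(x) ≠ 0, the function |u|^p u is differentiable at x and | x (|u|^p u)(x) + i t ∇(|u|^p u)(x) | ≤ (1+p) |u(x)|^p | x u(x) + i t ∇u(x) |, where |·| on both sides is the norm of a vector in ℂ^d. -/
noncomputable section

open MeasureTheory Complex Filter Topology ProbabilityTheory
open scoped ENNReal RealInnerProductSpace

private lemma euclid_norm_le {d : ℕ} (a b : EuclideanSpace ℂ (Fin d)) (C : ℝ) (hC : 0 ≤ C)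
    (h : ∀ j, ‖a j‖ ≤ C * ‖b j‖) : ‖a‖ ≤ C * ‖b‖ := by
  rw [EuclideanSpace.norm_eq, EuclideanSpace.norm_eq, ← Real.sqrt_sq hC, ← Real.sqrt_mul (by positivity)]
  apply Real.sqrt_le_sqrt
  rw [Finset.mul_sum]
  apply Finset.sum_le_sum
  intro j _
  have := h j
  calc ‖a j‖^2 ≤ (C * ‖b j‖)^2 := by
        apply sq_le_sq' (by nlinarith [norm_nonneg (a j)]) this
    _ = C^2 * ‖b j‖^2 := by ring

private lemma key_ineq (p t c : ℝ) (hp : 0 < p) (z w : ℂ) (hz : z ≠ 0) :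
    ‖((‖z‖^p : ℝ):ℂ) * (c * z + I*t*w) +
      I * ((t * (p * ‖z‖^(p-2) * ((starRingEnd ℂ) z * w).re) : ℝ):ℂ) * z‖ ≤
      (1+p) * ‖z‖^p * ‖c*z + I*t*w‖ := by
  set J := c*z + I*t*w with hJ
  have hzn : (0:ℝ) < ‖z‖ := norm_pos_iff.mpr hz
  have him : t * ((starRingEnd ℂ) z * w).re = ((starRingEnd ℂ) z * J).im := by
    simp [hJ, Complex.mul_im, Complex.mul_re, Complex.add_im, Complex.add_re]
    ring
  have h1 : ‖I * ((t * (p * ‖z‖^(p-2) * ((starRingEnd ℂ) z * w).re) : ℝ):ℂ) * z‖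
      ≤ p * ‖z‖^p * ‖J‖ := by
    rw [norm_mul, norm_mul, Complex.norm_I, one_mul, Complex.norm_real]
    have h2 : t * (p * ‖z‖^(p-2) * ((starRingEnd ℂ) z * w).re)
        = p * ‖z‖^(p-2) * (((starRingEnd ℂ) z * J).im) := by rw [← him]; ring
    rw [h2]
    have habs : |p * ‖z‖^(p-2) * (((starRingEnd ℂ) z * J).im)|
        ≤ p * ‖z‖^(p-2) * (‖z‖ * ‖J‖) := by
      rw [abs_mul, _root_.abs_of_nonneg (by positivity : (0:ℝ) ≤ p * ‖z‖^(p-2))]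
      gcongr
      calc |((starRingEnd ℂ) z * J).im| ≤ ‖(starRingEnd ℂ) z * J‖ := Complex.abs_im_le_norm _
        _ = ‖z‖ * ‖J‖ := by rw [norm_mul, RCLike.norm_conj]
    calc |p * ‖z‖^(p-2) * (((starRingEnd ℂ) z * J).im)| * ‖z‖
        ≤ (p * ‖z‖^(p-2) * (‖z‖ * ‖J‖)) * ‖z‖ := by gcongr
      _ = p * (‖z‖^(p-2) * ‖z‖^(2:ℝ)) * ‖J‖ := by rw [Real.rpow_two]; ring
      _ = p * ‖z‖^p * ‖J‖ := by rw [← Real.rpow_add hzn]; ring_nf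
  calc ‖((‖z‖^p : ℝ):ℂ) * J + I * ((t * (p * ‖z‖^(p-2) * ((starRingEnd ℂ) z * w).re) : ℝ):ℂ) * z‖
      ≤ ‖((‖z‖^p : ℝ):ℂ) * J‖ + ‖I * ((t * (p * ‖z‖^(p-2) * ((starRingEnd ℂ) z * w).re) : ℝ):ℂ) * z‖ :=
        norm_add_le _ _
    _ ≤ ‖z‖^p * ‖J‖ + p * ‖z‖^p * ‖J‖ := by
        rw [norm_mul, Complex.norm_real, Real.norm_of_nonneg (by positivity : (0:ℝ) ≤ ‖z‖^p)]
        exact add_le_add le_rfl h1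
    _ = (1+p) * ‖z‖^p * ‖J‖ := by ring

private lemma npow_deriv_comp_aux {d : ℕ} (p : ℝ) (hp : 0 < p) (u : Ed d → ℂ) (hu : Differentiable ℝ u)
    (x : Ed d) (hx : u x ≠ 0) :
    DifferentiableAt ℝ (fun y => ((‖u y‖ ^ p : ℝ) : ℂ) * u y) x ∧
    ∀ v, fderiv ℝ (fun y => ((‖u y‖ ^ p : ℝ) : ℂ) * u y) x v =
      ((‖u x‖^p : ℝ):ℂ) * (fderiv ℝ u x v) +
      ((p * ‖u x‖^(p-2) * (((starRingEnd ℂ) (u x)) * fderiv ℝ u x v).re : ℝ):ℂ) * u x := by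
  have hu' : HasFDerivAt u (fderiv ℝ u x) x := (hu x).hasFDerivAt
  have hzn : (0:ℝ) < ‖u x‖ := norm_pos_iff.mpr hx
  have hsq : HasFDerivAt (fun y => ‖u y‖^2) (2 • (innerSL ℝ (u x)).comp (fderiv ℝ u x)) x :=
    hu'.norm_sq
  have hr : HasFDerivAt (fun y => (‖u y‖^2) ^ (p/2))
      (((p/2) * (‖u x‖^2)^(p/2 - 1)) • (2 • (innerSL ℝ (u x)).comp (fderiv ℝ u x))) x :=
    hsq.rpow_const (Or.inl (by positivity))
  have heq : (fun y => (‖u y‖^2) ^ (p/2)) = fun y => ‖u y‖ ^ p := by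
    funext y
    rw [← Real.rpow_natCast (‖u y‖) 2, ← Real.rpow_mul (norm_nonneg _)]
    congr 1
    ring
  have hG : HasFDerivAt (fun y => ‖u y‖ ^ p)
      ((p * ‖u x‖^(p-2)) • ((innerSL ℝ (u x)).comp (fderiv ℝ u x))) x := by
    rw [← heq]
    convert hr using 1
    ext v
    have h2 : ((‖u x‖^2 : ℝ)) ^ (p/2 - 1) = ‖u x‖ ^ (p - 2) := by
      rw [← Real.rpow_natCast (‖u x‖) 2, ← Real.rpow_mul (norm_nonneg _)]
      congr 1
      ring
    simp only [ContinuousLinearMap.smul_apply, ContinuousLinearMap.coe_smul',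
      Pi.smul_apply, smul_eq_mul, two_smul, ContinuousLinearMap.add_apply]
    rw [h2]
    ring
  have hGc : HasFDerivAt (fun y => ((‖u y‖ ^ p : ℝ) : ℂ))
      (Complex.ofRealCLM.comp ((p * ‖u x‖^(p-2)) • ((innerSL ℝ (u x)).comp (fderiv ℝ u x)))) x :=
    Complex.ofRealCLM.hasFDerivAt.comp x hG
  have hN := hGc.mul hu'
  refine ⟨hN.differentiableAt, fun v => ?_⟩
  rw [show fderiv ℝ (fun y => ((‖u y‖ ^ p : ℝ) : ℂ) * u y) x = _ from hN.fderiv]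
  simp [ContinuousLinearMap.smul_apply, Complex.inner]
  ring

/-- **Lemma 2.10 (3): `|J(|u|ᵖu)| ≤ (1+p)|u|ᵖ|Ju|`.**
At every point where the differentiable function `u` does not vanish, `|u|ᵖu` is
differentiable and the Galilean vector field applied to it is controlled by
`(1+p)|u(x)|ᵖ |J(t)u(x)|` (norms of vectors in `ℂ^d`). -/
theorem galJ_of_nonlinearity_bound (d : ℕ) (hd : 1 ≤ d) (p t : ℝ) (hp : 0 < p)
    (u : Ed d → ℂ) (hu : Differentiable ℝ u) (x : Ed d) (hx : u x ≠ 0) :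
    DifferentiableAt ℝ (fun y => ((‖u y‖ ^ p : ℝ) : ℂ) * u y) x ∧
    ‖galJ d t (fun y => ((‖u y‖ ^ p : ℝ) : ℂ) * u y) x‖ ≤
      (1 + p) * ‖u x‖ ^ p * ‖galJ d t u x‖ := by
  obtain ⟨hdiff, hder⟩ := npow_deriv_comp_aux p hp u hu x hx
  refine ⟨hdiff, ?_⟩
  have hzn : (0:ℝ) < ‖u x‖ := norm_pos_iff.mpr hx
  apply euclid_norm_le _ _ _ (by positivity)
  intro j
  have hcomp : galJ d t (fun y => ((‖u y‖ ^ p : ℝ) : ℂ) * u y) x j =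
      ((‖u x‖^p : ℝ):ℂ) * (((x j : ℝ):ℂ) * u x + I * (t:ℂ) * fderiv ℝ u x (EuclideanSpace.single j 1)) +
      I * ((t * (p * ‖u x‖^(p-2) *
        (((starRingEnd ℂ) (u x)) * fderiv ℝ u x (EuclideanSpace.single j 1)).re) : ℝ):ℂ) * u x := by
    show (((x j : ℝ) : ℂ) * (((‖u x‖ ^ p : ℝ) : ℂ) * u x) +
      I * (t : ℂ) * fderiv ℝ (fun y => ((‖u y‖ ^ p : ℝ) : ℂ) * u y) x (EuclideanSpace.single j 1)) = _
    rw [hder (EuclideanSpace.single j 1)]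
    push_cast
    ring
  have hcompu : galJ d t u x j =
      ((x j : ℝ):ℂ) * u x + I * (t:ℂ) * fderiv ℝ u x (EuclideanSpace.single j 1) := rfl
  rw [hcomp, hcompu]
  exact key_ineq p t (x j) hp (u x) (fderiv ℝ u x (EuclideanSpace.single j 1)) hx
end
end

section
/- Let d ≥ 1, t ≠ 0, and let f : (ℝ∖{0}) × ℝ^d → ℂ be such that f(1/t,·) ∈ L²(ℝ^d). Then 𝒯f(t,·) ∈ L²(ℝ^d) and ‖𝒯f(t,·)‖_{L²(ℝ^d)} = ‖f(1/t,·)‖_{L²(ℝ^d)}. If moreover f(1/t,·) is weakly differentiable with J(1/t)f(1/t,·) := x f(1/t,x) + i(1/t)∇f(1/t,x) ∈ L²(ℝ^d; ℂ^d), then the distributional gradient ∇(𝒯f)(t,·) belongs to L²(ℝ^d; ℂ^d) and ‖∇(𝒯f)(t,·)‖_{L²(ℝ^d)} = ‖J(1/t)f(1/t,·)‖_{L²(ℝ^d)}. -/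
noncomputable section

open MeasureTheory Complex Filter Topology ProbabilityTheory
open scoped ENNReal RealInnerProductSpace

section PCTHelpers

lemma my_lintegral_comp_inv_smul (d : ℕ) {t : ℝ} (ht : t ≠ 0) (N : Ed d → ℝ≥0∞) :
    ∫⁻ x, N (t⁻¹ • x) = ENNReal.ofReal (|t| ^ d) * ∫⁻ x, N x := by
  let e : Ed d ≃ᵐ Ed d :=
    (Homeomorph.smul (Units.mk0 t⁻¹ (inv_ne_zero ht))).toMeasurableEquiv
  have hmap : Measure.map (fun x : Ed d => t⁻¹ • x) volume
      = ENNReal.ofReal |(t⁻¹ ^ Module.finrank ℝ (Ed d))⁻¹| • volume :=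
    Measure.map_addHaar_smul volume (inv_ne_zero ht)
  have h1 : ∫⁻ x, N (t⁻¹ • x) = ∫⁻ x, N x ∂(Measure.map (fun x : Ed d => t⁻¹ • x) volume) := by
    rw [show (fun x : Ed d => t⁻¹ • x) = ⇑e from rfl, lintegral_map_equiv N e]
    rfl
  rw [h1, hmap, lintegral_smul_measure]
  congr 1
  rw [finrank_euclideanSpace_fin, ← inv_pow, inv_inv, _root_.abs_pow]

lemma my_scale_norm {α β : Type*} [NormedAddCommGroup α] [NormedAddCommGroup β]
    (d : ℕ) {t : ℝ} (ht : t ≠ 0) {u : Ed d → α} {h : Ed d → β}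
    (hu : AEStronglyMeasurable u volume) (hh : MemLp h 2 volume)
    (hnorm : ∀ x, ‖u x‖ = |t| ^ (-(d : ℝ)/2) * ‖h (t⁻¹ • x)‖) :
    MemLp u 2 volume ∧ eLpNorm u 2 volume = eLpNorm h 2 volume := by
  have htpos : (0:ℝ) < |t| := abs_pos.2 ht
  have hcpos : (0:ℝ) < |t| ^ (-(d : ℝ)/2) := Real.rpow_pos_of_pos htpos _
  have key : eLpNorm u 2 volume = eLpNorm h 2 volume := by
    rw [eLpNorm_eq_lintegral_rpow_enorm_toReal two_ne_zero ENNReal.ofNat_ne_top,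
        eLpNorm_eq_lintegral_rpow_enorm_toReal two_ne_zero ENNReal.ofNat_ne_top]
    congr 1
    have h2 : ∀ x : Ed d, ‖u x‖ₑ ^ (2:ℝ≥0∞).toReal
        = ENNReal.ofReal ((|t| ^ (-(d : ℝ)/2))^(2:ℝ≥0∞).toReal) *
          ‖h (t⁻¹ • x)‖ₑ ^ (2:ℝ≥0∞).toReal := by
      intro x
      rw [← ofReal_norm, ← ofReal_norm, hnorm x,
        ENNReal.ofReal_mul hcpos.le, ← ENNReal.ofReal_rpow_of_pos hcpos,
        ENNReal.mul_rpow_of_nonneg _ _ (by positivity)]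
    simp only [h2]
    rw [lintegral_const_mul' _ _ ENNReal.ofReal_ne_top,
      my_lintegral_comp_inv_smul d ht (fun y => ‖h y‖ₑ ^ (2:ℝ≥0∞).toReal),
      ← mul_assoc]
    have : ENNReal.ofReal ((|t| ^ (-(d : ℝ)/2)) ^ (2:ℝ≥0∞).toReal) * ENNReal.ofReal (|t| ^ d)
        = 1 := by
      rw [← ENNReal.ofReal_mul (by positivity)]
      rw [show ((1:ℝ≥0∞)) = ENNReal.ofReal 1 from (ENNReal.ofReal_one).symm]
      congr 1
      rw [ENNReal.toReal_ofNat, ← Real.rpow_natCast |t| d,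
        ← Real.rpow_mul htpos.le, ← Real.rpow_add htpos]
      norm_num
    rw [this, one_mul]
  exact ⟨⟨hu, key ▸ hh.2⟩, key⟩

def cconst (d : ℕ) (t : ℝ) : ℂ := (I * (t : ℂ)) ^ (-(d : ℂ)/2)

lemma norm_cconst (d : ℕ) (t : ℝ) : ‖cconst d t‖ = |t| ^ (-(d : ℝ)/2) := by
  unfold cconst
  rw [show (-(d : ℂ)/2) = ((-(d : ℝ)/2 : ℝ) : ℂ) by push_cast; ring]
  rw [Complex.norm_cpow_real, norm_mul, Complex.norm_I, one_mul,
    Complex.norm_real, Real.norm_eq_abs]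

lemma cconst_ne_zero (d : ℕ) {t : ℝ} (ht : t ≠ 0) : cconst d t ≠ 0 := by
  intro h
  have := norm_cconst d t
  rw [h, norm_zero] at this
  exact absurd this.symm (ne_of_gt (Real.rpow_pos_of_pos (abs_pos.2 ht) _))

def Efun (d : ℕ) (t : ℝ) : Ed d → ℂ :=
  fun x => Complex.exp (((‖x‖^2 : ℝ) : ℂ) * (I / (2*(t : ℂ))))

lemma Efun_apply (d : ℕ) (t : ℝ) (x : Ed d) :
    Efun d t x = Complex.exp (I * ((‖x‖ : ℂ))^2 / (2*(t : ℂ))) := by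
  unfold Efun; congr 1; push_cast; ring

lemma Efun_norm (d : ℕ) (t : ℝ) (x : Ed d) : ‖Efun d t x‖ = 1 := by
  unfold Efun
  rw [Complex.norm_exp]
  have h0 : ((((‖x‖^2 : ℝ)) : ℂ) * (I / (2*(t : ℂ)))) = ((‖x‖^2/(2*t) : ℝ) : ℂ) * I := by
    push_cast; ring
  have h1 : (((‖x‖^2/(2*t) : ℝ) : ℂ) * I).re = 0 := by
    simp only [Complex.mul_re, Complex.I_re, Complex.I_im, Complex.ofReal_im, Complex.ofReal_re]
    ring
  rw [h0, h1, Real.exp_zero]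

lemma Efun_contDiff (d : ℕ) (t : ℝ) : ContDiff ℝ (⊤ : ℕ∞) (Efun d t) :=
  Complex.contDiff_exp.comp
    ((Complex.ofRealCLM.contDiff.comp (contDiff_norm_sq ℝ)).mul contDiff_const)

lemma Efun_hasFDerivAt (d : ℕ) (t : ℝ) (x : Ed d) :
    HasFDerivAt (Efun d t)
      ((Efun d t x) • ((I / (2*(t : ℂ))) •
        (Complex.ofRealCLM.comp (2 • ((innerSL ℝ x).comp (ContinuousLinearMap.id ℝ (Ed d))))))) x := by
  have h1 : HasFDerivAt (fun y : Ed d => ‖y‖^2)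
      (2 • ((innerSL ℝ x).comp (ContinuousLinearMap.id ℝ (Ed d)))) x :=
    (hasFDerivAt_id x).norm_sq
  have h2 := Complex.ofRealCLM.hasFDerivAt.comp x h1
  have h3 := h2.mul_const (I / (2*(t : ℂ)))
  exact h3.cexp

lemma Efun_fderiv_apply (d : ℕ) (t : ℝ) (x v : Ed d) :
    fderiv ℝ (Efun d t) x v = Efun d t x * (I / (2*(t : ℂ))) * ((2 * ⟪x, v⟫ : ℝ) : ℂ) := by
  rw [(Efun_hasFDerivAt d t x).fderiv]
  simp only [ContinuousLinearMap.smul_apply, ContinuousLinearMap.comp_apply,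
    ContinuousLinearMap.coe_id', id_eq, Complex.ofRealCLM_apply, two_smul,
    ContinuousLinearMap.add_apply, innerSL_apply_apply, smul_eq_mul]
  push_cast
  ring

lemma integrable_L2_mul_cont {d : ℕ} {g u : Ed d → ℂ} (hg : MemLp g 2 volume)
    (hu : Continuous u) (hsupp : HasCompactSupport u) :
    Integrable (fun y => g y * u y) volume := by
  have hKc : IsCompact (tsupport u) := hsupp
  have h1 : IntegrableOn g (tsupport u) volume :=
    (hg.locallyIntegrable one_le_two).integrableOn_isCompact hKc
  obtain ⟨C, hC⟩ := hu.bounded_above_of_compact_support hsupp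
  have h2 : Integrable (fun y => u y * g y) (volume.restrict (tsupport u)) :=
    h1.bdd_mul hu.aestronglyMeasurable (ae_of_all _ hC)
  have h3 : (fun y => g y * u y) = Set.indicator (tsupport u) (fun y => u y * g y) := by
    funext y; by_cases hy : y ∈ tsupport u
    · rw [Set.indicator_of_mem hy]; ring
    · rw [Set.indicator_of_notMem hy, image_eq_zero_of_notMem_tsupport hy, mul_zero]
  rw [h3, integrable_indicator_iff (isClosed_tsupport u).measurableSet]
  exact h2

lemma memLp_conj {d : ℕ} {g : Ed d → ℂ} (hg : MemLp g 2 volume) :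
    MemLp (fun y => (starRingEnd ℂ) (g y)) 2 volume :=
  hg.of_le (Complex.continuous_conj.comp_aestronglyMeasurable hg.1)
    (Filter.Eventually.of_forall fun y => by simp)

lemma memLp_coord_conj {d : ℕ} {F : Ed d → EuclideanSpace ℂ (Fin d)}
    (hF : MemLp F 2 volume) (j : Fin d) :
    MemLp (fun y => (starRingEnd ℂ) (F y j)) 2 volume := by
  have ha : AEStronglyMeasurable (fun y => (starRingEnd ℂ) (F y j)) volume :=
    (Complex.continuous_conj.comp (EuclideanSpace.proj (𝕜 := ℂ) j).continuous).comp_aestronglyMeasurable hF.1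
  refine hF.of_le ha (Filter.Eventually.of_forall fun y => ?_)
  have h1 : F y j = (inner ℂ (EuclideanSpace.single j (1:ℂ)) (F y) : ℂ) := by
    rw [EuclideanSpace.inner_single_left]; simp
  rw [RCLike.norm_conj, h1]
  calc ‖(inner ℂ (EuclideanSpace.single j (1:ℂ)) (F y) : ℂ)‖
      ≤ ‖EuclideanSpace.single j (1:ℂ)‖ * ‖F y‖ := norm_inner_le_norm _ _
    _ = ‖F y‖ := by rw [EuclideanSpace.norm_single]; simp

section Key
variable {d : ℕ} {t : ℝ}

-- derivative of the transformed test function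
lemma psi_fderiv (ht : t ≠ 0) {φ : Ed d → ℂ} (hφ : ContDiff ℝ (⊤ : ℕ∞) φ) (j : Fin d) (y : Ed d) :
    fderiv ℝ (fun z => (starRingEnd ℂ) (Efun d t (t • z) * φ (t • z))) y
        (EuclideanSpace.single j 1)
      = (starRingEnd ℂ) (I * (t:ℂ) * ((y j : ℝ):ℂ) * (Efun d t (t • y) * φ (t • y))
          + (t:ℂ) * (Efun d t (t • y) * fderiv ℝ φ (t • y) (EuclideanSpace.single j 1))) := by
  have htc : (t : ℂ) ≠ 0 := Complex.ofReal_ne_zero.2 ht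
  have hsm' : HasFDerivAt (fun z : Ed d => t • z) (t • ContinuousLinearMap.id ℝ (Ed d)) y :=
    (hasFDerivAt_id y).const_smul t
  have hA : HasFDerivAt (fun z : Ed d => Efun d t (t • z))
      (((Efun d t (t • y)) • ((I / (2*(t : ℂ))) •
        (Complex.ofRealCLM.comp (2 • ((innerSL ℝ (t • y)).comp
          (ContinuousLinearMap.id ℝ (Ed d))))))).comp (t • ContinuousLinearMap.id ℝ (Ed d))) y :=
    (Efun_hasFDerivAt d t (t • y)).comp y hsm'
  have hB : HasFDerivAt (fun z : Ed d => φ (t • z))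
      ((fderiv ℝ φ (t • y)).comp (t • ContinuousLinearMap.id ℝ (Ed d))) y :=
    ((hφ.differentiable (by simp) (t • y)).hasFDerivAt).comp y hsm'
  have hAB := hA.mul hB
  have hconj := (Complex.conjCLE.toContinuousLinearMap.hasFDerivAt
    (x := Efun d t (t • y) * φ (t • y))).comp y hAB
  have hfun : (fun z => (starRingEnd ℂ) (Efun d t (t • z) * φ (t • z)))
      = ⇑Complex.conjCLE.toContinuousLinearMap ∘ (fun z => Efun d t (t • z) * φ (t • z)) := by
    funext z; simp [Complex.conjCLE_apply]
  rw [hfun, show (fun z => Efun d t (t • z) * φ (t • z)) = ((fun z => Efun d t (t • z)) * fun z => φ (t • z)) from rfl, hconj.fderiv]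
  simp only [ContinuousLinearMap.coe_comp', Function.comp_apply,
    ContinuousLinearMap.add_apply, ContinuousLinearMap.coe_smul', Pi.smul_apply,
    ContinuousLinearMap.smul_apply, ContinuousLinearMap.coe_id', id_eq,
    Complex.ofRealCLM_apply, two_smul, innerSL_apply_apply, smul_eq_mul,
    ContinuousLinearEquiv.coe_coe, Complex.conjCLE_apply]
  rw [real_inner_smul_left, real_inner_smul_right]
  have hinner : ⟪y, (EuclideanSpace.single j (1:ℝ))⟫ = y j := by
    rw [EuclideanSpace.inner_single_right]; simp
  rw [hinner]
  rw [(fderiv ℝ φ (t • y)).map_smul]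
  congr 1
  have : ((t * (t * y j) + t * (t * y j) : ℝ) : ℂ) = 2 * t * t * ((y j : ℝ):ℂ) := by
    push_cast; ring
  rw [Complex.real_smul, this]
  field_simp
  ring
end Key

lemma weak_grad_key (d : ℕ) {t : ℝ} (ht : t ≠ 0)
    (g : Ed d → ℂ) (G F : Ed d → EuclideanSpace ℂ (Fin d))
    (hg : MemLp g 2 volume) (hG : HasWeakGradient d g G) (hF : MemLp F 2 volume)
    (hFdef : ∀ (y : Ed d) (j : Fin d),
      F y j = ((y j : ℝ):ℂ) * g y + I * ((t⁻¹ : ℝ):ℂ) * G y j)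
    (φ : Ed d → ℂ) (hφ : ContDiff ℝ (⊤ : ℕ∞) φ) (hφc : HasCompactSupport φ) (j : Fin d) :
    ∫ x, (cconst d t * Efun d t x * (starRingEnd ℂ) (g (t⁻¹ • x)))
        * fderiv ℝ φ x (EuclideanSpace.single j 1)
      = -∫ x, (I * cconst d t * Efun d t x * (starRingEnd ℂ) (F (t⁻¹ • x) j)) * φ x := by
  have htc : (t : ℂ) ≠ 0 := Complex.ofReal_ne_zero.2 ht
  set ej : Ed d := EuclideanSpace.single j 1 with hej
  set ψ : Ed d → ℂ := fun z => (starRingEnd ℂ) (Efun d t (t • z) * φ (t • z)) with hψ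
  -- smoothness of ψ
  have hsm : ContDiff ℝ (⊤ : ℕ∞) (fun z : Ed d => t • z) := (contDiff_id.const_smul t)
  have hψ_cd : ContDiff ℝ (⊤ : ℕ∞) ψ := by
    have h1 : ContDiff ℝ (⊤ : ℕ∞) (fun z : Ed d => Efun d t (t • z) * φ (t • z)) :=
      ((Efun_contDiff d t).comp hsm).mul (hφ.comp hsm)
    have h2 := Complex.conjCLE.contDiff.comp h1
    have : ψ = ⇑Complex.conjCLE ∘ (fun z : Ed d => Efun d t (t • z) * φ (t • z)) := by
      funext z; simp [hψ, Complex.conjCLE_apply]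
    rw [this]; exact h2
  -- compact support of ψ
  have hb_supp : HasCompactSupport (fun z : Ed d => φ (t • z)) := hφc.comp_smul ht
  have hab_supp : HasCompactSupport (fun z : Ed d => Efun d t (t • z) * φ (t • z)) :=
    hb_supp.mul_left
  have hψ_supp : HasCompactSupport ψ := hab_supp.comp_left (map_zero (starRingEnd ℂ))
  -- apply the weak gradient hypothesis
  have happly := hG ψ hψ_cd hψ_supp j
  -- continuity facts
  have ha_cont : Continuous (fun z : Ed d => Efun d t (t • z)) :=
    (Efun_contDiff d t).continuous.comp (continuous_const_smul t)
  have hb_cont : Continuous (fun z : Ed d => φ (t • z)) :=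
    hφ.continuous.comp (continuous_const_smul t)
  have hD_cont : Continuous (fun x : Ed d => fderiv ℝ φ x ej) :=
    (hφ.continuous_fderiv (by simp)).clm_apply continuous_const
  have hDb_cont : Continuous (fun z : Ed d => fderiv ℝ φ (t • z) ej) :=
    hD_cont.comp (continuous_const_smul t)
  have hyj_cont : Continuous (fun z : Ed d => ((z j : ℝ) : ℂ)) :=
    Complex.continuous_ofReal.comp (EuclideanSpace.proj (𝕜 := ℝ) j).continuous
  -- compact supports
  have hD_supp : HasCompactSupport (fun x : Ed d => fderiv ℝ φ x ej) :=
    (hφc.fderiv ℝ).comp_left (g := fun L : Ed d →L[ℝ] ℂ => L ej) rfl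
  have hDb_supp : HasCompactSupport (fun z : Ed d => fderiv ℝ φ (t • z) ej) :=
    hD_supp.comp_smul ht
  -- integrability
  have intA : Integrable (fun y => (starRingEnd ℂ) (g y)
      * (Efun d t (t • y) * fderiv ℝ φ (t • y) ej)) volume :=
    integrable_L2_mul_cont (memLp_conj hg) (ha_cont.mul hDb_cont) (hDb_supp.mul_left)
  have intB : Integrable (fun y => (starRingEnd ℂ) (F y j)
      * (Efun d t (t • y) * φ (t • y))) volume :=
    integrable_L2_mul_cont (memLp_coord_conj hF j) (ha_cont.mul hb_cont) hab_supp
  have intC : Integrable (fun y => (starRingEnd ℂ) (g y)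
      * (((y j : ℝ):ℂ) * (Efun d t (t • y) * φ (t • y)))) volume :=
    integrable_L2_mul_cont (memLp_conj hg) (hyj_cont.mul (ha_cont.mul hb_cont))
      (hab_supp.mul_left)
  -- rewrite the two integrands of happly
  have e1 : ∀ y : Ed d, g y * fderiv ℝ ψ y ej
      = (starRingEnd ℂ) ((I * (t:ℂ)) * ((starRingEnd ℂ) (g y)
          * (((y j : ℝ):ℂ) * (Efun d t (t • y) * φ (t • y))))
        + (t:ℂ) * ((starRingEnd ℂ) (g y)
          * (Efun d t (t • y) * fderiv ℝ φ (t • y) ej))) := by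
    intro y
    rw [hψ, psi_fderiv ht hφ j y]
    rw [show g y = (starRingEnd ℂ) ((starRingEnd ℂ) (g y)) from (Complex.conj_conj _).symm]
    rw [← map_mul]
    rw [Complex.conj_conj]
    congr 1
    ring
  have e2 : ∀ y : Ed d, G y j * ψ y
      = (starRingEnd ℂ) ((I * (t:ℂ)) * ((starRingEnd ℂ) (F y j)
            * (Efun d t (t • y) * φ (t • y)))
          - (I * (t:ℂ)) * ((starRingEnd ℂ) (g y)
            * (((y j : ℝ):ℂ) * (Efun d t (t • y) * φ (t • y))))) := by
    intro y
    have hGj : G y j = -(I * (t:ℂ)) * F y j + (I * (t:ℂ)) * (((y j : ℝ):ℂ) * g y) := by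
      rw [hFdef y j]
      push_cast
      field_simp
      linear_combination G y j * Complex.I_sq
    have : G y j * ψ y = (starRingEnd ℂ) ((starRingEnd ℂ) (G y j)
        * (Efun d t (t • y) * φ (t • y))) := by
      rw [hψ, map_mul, Complex.conj_conj]
    rw [this]
    congr 1
    rw [hGj]
    simp only [map_add, map_mul, map_neg, Complex.conj_I, Complex.conj_ofReal]
    ring
  -- transform the identity
  have h5 : ∫ y, g y * fderiv ℝ ψ y ej = -∫ y, G y j * ψ y := happly
  rw [integral_congr_ae (Filter.Eventually.of_forall e1),
      integral_congr_ae (Filter.Eventually.of_forall e2), integral_conj, integral_conj,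
      ← map_neg] at h5
  have h6 := (starRingEnd ℂ).injective h5
  rw [integral_add (intC.const_mul _) (intA.const_mul _),
      integral_sub (intB.const_mul _) (intC.const_mul _)] at h6
  simp only [integral_const_mul] at h6
  set A := ∫ y, (starRingEnd ℂ) (g y) * (Efun d t (t • y) * fderiv ℝ φ (t • y) ej) with hA
  set B := ∫ y, (starRingEnd ℂ) (F y j) * (Efun d t (t • y) * φ (t • y)) with hB
  set C := ∫ y, (starRingEnd ℂ) (g y)
      * (((y j : ℝ):ℂ) * (Efun d t (t • y) * φ (t • y))) with hC
  have hAB : A = -(I * B) := by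
    have h7 : (t:ℂ) * A = (t:ℂ) * (-(I * B)) := by linear_combination h6
    exact mul_left_cancel₀ htc h7
  -- change of variables
  have hL : ∫ x, (cconst d t * Efun d t x * (starRingEnd ℂ) (g (t⁻¹ • x))) * fderiv ℝ φ x ej
      = |t ^ Module.finrank ℝ (Ed d)| • ∫ y, cconst d t * ((starRingEnd ℂ) (g y)
          * (Efun d t (t • y) * fderiv ℝ φ (t • y) ej)) := by
    rw [← Measure.integral_comp_inv_smul volume (fun y => cconst d t * ((starRingEnd ℂ) (g y)
      * (Efun d t (t • y) * fderiv ℝ φ (t • y) ej))) t]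
    apply integral_congr_ae
    filter_upwards with x
    rw [smul_inv_smul₀ ht x]
    ring
  have hR : ∫ x, (I * cconst d t * Efun d t x * (starRingEnd ℂ) (F (t⁻¹ • x) j)) * φ x
      = |t ^ Module.finrank ℝ (Ed d)| • ∫ y, (I * cconst d t) * ((starRingEnd ℂ) (F y j)
          * (Efun d t (t • y) * φ (t • y))) := by
    rw [← Measure.integral_comp_inv_smul volume (fun y => (I * cconst d t) * ((starRingEnd ℂ) (F y j)
      * (Efun d t (t • y) * φ (t • y)))) t]
    apply integral_congr_ae
    filter_upwards with x
    rw [smul_inv_smul₀ ht x]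
    ring
  rw [hL, hR, ← smul_neg]
  congr 1
  simp only [integral_const_mul]
  rw [← hA, ← hB, hAB]
  ring

end PCTHelpers

/-- **The identities (H1-T) of Section 2.3.**
For `t ≠ 0`: `‖𝒯f(t)‖_{L²} = ‖f(1/t)‖_{L²}`, and if `f(1/t)` has a weak gradient `G` such
that `J(1/t)f(1/t) = x f(1/t,x) + i(1/t)G(x)` lies in `L²(ℝ^d; ℂ^d)`, then `𝒯f(t,·)` has a
weak gradient `H ∈ L²` with `‖H‖_{L²} = ‖J(1/t)f(1/t)‖_{L²}`. -/
theorem pct_L2_identities (d : ℕ) (hd : 1 ≤ d) (t : ℝ) (ht : t ≠ 0) (f : ℝ → Ed d → ℂ)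
    (hf : MemLp (f t⁻¹) 2 volume) :
    (MemLp (fun x => pct d f t x) 2 volume ∧
      eLpNorm (fun x => pct d f t x) 2 volume = eLpNorm (f t⁻¹) 2 volume) ∧
    ∀ G : Ed d → EuclideanSpace ℂ (Fin d),
      HasWeakGradient d (f t⁻¹) G →
      MemLp (fun x : Ed d => (WithLp.equiv 2 (Fin d → ℂ)).symm fun j =>
        ((x j : ℝ) : ℂ) * f t⁻¹ x + I * ((t⁻¹ : ℝ) : ℂ) * G x j) 2 volume →
      ∃ H : Ed d → EuclideanSpace ℂ (Fin d),
        HasWeakGradient d (fun x => pct d f t x) H ∧ MemLp H 2 volume ∧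
        eLpNorm H 2 volume =
          eLpNorm (fun x : Ed d => (WithLp.equiv 2 (Fin d → ℂ)).symm fun j =>
            ((x j : ℝ) : ℂ) * f t⁻¹ x + I * ((t⁻¹ : ℝ) : ℂ) * G x j) 2 volume := by
  have htc : (t : ℂ) ≠ 0 := Complex.ofReal_ne_zero.2 ht
  have hpct_eq : ∀ x : Ed d, pct d f t x
      = cconst d t * Efun d t x * (starRingEnd ℂ) (f t⁻¹ (t⁻¹ • x)) := by
    intro x; unfold pct cconst; rw [Efun_apply]
  have haesm : AEStronglyMeasurable (fun x => pct d f t x) volume := by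
    have h1 : AEStronglyMeasurable
        ((fun z => (starRingEnd ℂ) z) ∘ ((f t⁻¹) ∘ (fun x : Ed d => t⁻¹ • x))) volume :=
      Complex.continuous_conj.comp_aestronglyMeasurable
        (hf.1.comp_quasiMeasurePreserving
          (Measure.quasiMeasurePreserving_smul volume (inv_ne_zero ht)))
    have h2 : Continuous (fun x : Ed d => cconst d t * Efun d t x) :=
      continuous_const.mul (Efun_contDiff d t).continuous
    exact (h2.aestronglyMeasurable.mul h1).congr
      (Filter.Eventually.of_forall fun x => (hpct_eq x).symm)
  have hnorm1 : ∀ x, ‖pct d f t x‖ = |t| ^ (-(d : ℝ)/2) * ‖f t⁻¹ (t⁻¹ • x)‖ := by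
    intro x
    rw [hpct_eq x, norm_mul, norm_mul, norm_cconst, Efun_norm, RCLike.norm_conj]
    ring
  obtain ⟨hmem1, heq1⟩ := my_scale_norm d ht haesm hf hnorm1
  refine ⟨⟨hmem1, heq1⟩, ?_⟩
  intro G hG hF
  set F : Ed d → EuclideanSpace ℂ (Fin d) := fun x => (WithLp.equiv 2 (Fin d → ℂ)).symm fun j =>
    ((x j : ℝ) : ℂ) * f t⁻¹ x + I * ((t⁻¹ : ℝ) : ℂ) * G x j with hFdef0
  have hFcoord : ∀ (y : Ed d) (j : Fin d),
      F y j = ((y j : ℝ):ℂ) * f t⁻¹ y + I * ((t⁻¹ : ℝ):ℂ) * G y j := by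
    intro y j
    rw [hFdef0]
    rfl
  set H : Ed d → EuclideanSpace ℂ (Fin d) := fun x => (WithLp.equiv 2 (Fin d → ℂ)).symm fun j =>
    I * cconst d t * Efun d t x * (starRingEnd ℂ) (F (t⁻¹ • x) j) with hHdef
  have hHcoord : ∀ (x : Ed d) (i : Fin d),
      H x i = I * cconst d t * Efun d t x * (starRingEnd ℂ) (F (t⁻¹ • x) i) := by
    intro x i
    rw [hHdef]
    rfl
  -- measurability of H
  have hFsm : AEStronglyMeasurable (fun x : Ed d => F (t⁻¹ • x)) volume :=
    hF.1.comp_quasiMeasurePreserving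
      (Measure.quasiMeasurePreserving_smul volume (inv_ne_zero ht))
  have hsc_cont : Continuous (fun x : Ed d => (starRingEnd ℂ) (I * cconst d t * Efun d t x)) :=
    Complex.continuous_conj.comp (continuous_const.mul (Efun_contDiff d t).continuous)
  have hHrepr : H = fun x =>
      (LinearIsometryEquiv.piLpCongrRight 2 (fun _ : Fin d => RCLike.conjLIE))
        ((starRingEnd ℂ) (I * cconst d t * Efun d t x) • F (t⁻¹ • x)) := by
    funext x; ext i
    rw [hHcoord x i]
    rw [LinearIsometryEquiv.piLpCongrRight_apply, PiLp.toLp_apply]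
    simp only [hFdef0, WithLp.equiv_symm_apply, WithLp.ofLp_toLp, WithLp.ofLp_smul, Pi.smul_apply, RCLike.conjLIE_apply, smul_eq_mul, map_mul, Complex.conj_conj]
  have hHaesm : AEStronglyMeasurable H volume := by
    rw [hHrepr]
    exact (LinearIsometryEquiv.piLpCongrRight 2
        (fun _ : Fin d => RCLike.conjLIE)).continuous.comp_aestronglyMeasurable
      (hsc_cont.aestronglyMeasurable.smul hFsm)
  have hnormH : ∀ x, ‖H x‖ = |t| ^ (-(d : ℝ)/2) * ‖F (t⁻¹ • x)‖ := by
    intro x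
    have hco : ∀ i : Fin d, ‖H x i‖ = ‖cconst d t‖ * ‖F (t⁻¹ • x) i‖ := by
      intro i
      rw [hHcoord x i, norm_mul, norm_mul, norm_mul, Complex.norm_I, Efun_norm,
        RCLike.norm_conj]
      ring
    rw [EuclideanSpace.norm_eq, EuclideanSpace.norm_eq]
    simp only [hco, mul_pow]
    rw [← Finset.mul_sum, Real.sqrt_mul (sq_nonneg _), Real.sqrt_sq (norm_nonneg _),
      norm_cconst]
  obtain ⟨hm2, he2⟩ := my_scale_norm d ht hHaesm hF hnormH
  refine ⟨H, ?_, hm2, he2⟩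
  intro φ hφ hφc j
  have hkey := weak_grad_key d ht (f t⁻¹) G F hf hG hF hFcoord φ hφ hφc j
  simp only [hpct_eq, hHcoord]
  exact hkey
end
end
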